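/- Let w ∈ L¹(ℝ³) with ∫ w = a, and let u ∈ L²(ℝ³) ∩ L^∞(ℝ³) be such that |u|² is Lipschitz with Lipschitz constant L, and suppose |w(z)| ≤ C|z|^{−γ} for |z| ≥ 1 with γ > 3. Let w_N(x) = N^{3β} w(N^β x) with β > 0 and α := β(γ−3)/(γ−2). Then ‖a|u|² − w_N * |u|²‖_∞ ≤ ‖w‖₁ L N^{−α} + (8πC/(γ−3)) ‖u‖_∞² N^{−α}. -/

import Mathlib

/-!
Substituting `z = N^β (x - y)` turns the convolution into `∫ w(z) |u|²(x - N^{-β} z) dz`, so the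
difference is `∫ w(z) (|u|²(x) - |u|²(x - N^{-β} z)) dz`. On the ball `‖z‖ ≤ R` the Lipschitz bound
controls the integrand by `|w(z)| L N^{-β} R`; outside it by `2 ‖u‖∞² C ‖z‖^{-γ}`, whose integral
over `‖z‖ > R` is `2 ‖u‖∞² C · 4π R^{3-γ} / (γ - 3)` in polar coordinates. The choice
`R = N^{β-α}` makes both `N^{-β} R` and `R^{3-γ}` equal to `N^{-α}`.
-/

open MeasureTheory Real Metric Set Module

theorem indicator_compl_closedBall_comp_norm {E : Type*} [SeminormedAddCommGroup E]
    (g : ℝ → ℝ) (R : ℝ) :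
    (closedBall (0 : E) R)ᶜ.indicator (fun z => g ‖z‖) = fun z => (Ioi R).indicator g ‖z‖ := by
  have : (closedBall (0 : E) R)ᶜ = norm ⁻¹' Ioi R := by ext; simp
  rw [this]
  exact funext fun _ => indicator_comp_right (g := g) norm

theorem pow_smul_indicator_Ioi_rpow_neg {d : ℕ} (hd : 1 ≤ d) {γ R y : ℝ} (hy : 0 < y) :
    y ^ (d - 1) • (Ioi R).indicator (· ^ (-γ)) y = (Ioi R).indicator (· ^ ((d : ℝ) - 1 - γ)) y := by
  by_cases hyR : y ∈ Ioi R
  · rw [indicator_of_mem hyR, indicator_of_mem hyR, smul_eq_mul, ← rpow_natCast,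
      ← rpow_add hy, Nat.cast_sub hd, Nat.cast_one, sub_eq_add_neg _ γ]
  · simp [indicator_of_notMem hyR]

theorem nonneg_of_abs_sub_le_mul_norm {E : Type*} [NormedAddCommGroup E] [Nontrivial E]
    {f : E → ℝ} {L : ℝ} (hf : ∀ x y, |f x - f y| ≤ L * ‖x - y‖) : 0 ≤ L := by
  obtain ⟨z, hz⟩ := exists_ne (0 : E)
  have := (abs_nonneg _).trans (hf z 0)
  rw [sub_zero] at this
  exact nonneg_of_mul_nonneg_left this (norm_pos_iff.mpr hz)

theorem abs_integral_mul_sub_integral_mul_comp_le {E : Type*} [NormedAddCommGroup E]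
    [NormedSpace ℝ E] [MeasurableSpace E] [BorelSpace E] {μ : Measure E} {w f : E → ℝ}
    (hw : Integrable w μ) {K : NNReal} (hf : LipschitzWith K f) {M : ℝ} (hM : ∀ y, |f y| ≤ M)
    (x : E) {s R : ℝ} (hs : 0 ≤ s) (hR : 0 ≤ R) :
    |(∫ z, w z ∂μ) * f x - ∫ z, w z * f (x - s • z) ∂μ|
      ≤ (∫ z, |w z| ∂μ) * K * (s * R) + 2 * M * ∫ z in (closedBall 0 R)ᶜ, |w z| ∂μ := by
  set D : E → ℝ := fun z => f x - f (x - s • z)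
  have hD_lip : ∀ z, |D z| ≤ K * (s * ‖z‖) := fun z => by
    simpa [D, Real.dist_eq, dist_eq_norm, norm_smul, abs_of_nonneg hs]
      using hf.dist_le_mul x (x - s • z)
  have hD_bdd : ∀ z, |D z| ≤ 2 * M := fun z =>
    (abs_sub _ _).trans (by linarith [hM x, hM (x - s • z)])
  have hwf : Integrable (fun z => w z * f (x - s • z)) μ :=
    hw.mul_bdd (c := M) (hf.continuous.comp (by fun_prop)).aestronglyMeasurable
      (.of_forall fun z => by simpa using hM _)
  have h_diff : (∫ z, w z ∂μ) * f x - ∫ z, w z * f (x - s • z) ∂μ = ∫ z, w z * D z ∂μ := by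
    rw [← integral_mul_const, ← integral_sub (hw.mul_const _) hwf]
    simp only [D, mul_sub]
  have hwD : Integrable (fun z => |w z * D z|) μ := by
    simpa only [D, mul_sub, Pi.sub_def] using ((hw.mul_const (f x)).sub hwf).abs
  have h_ball : ∫ z in closedBall 0 R, |w z * D z| ∂μ ≤ (∫ z, |w z| ∂μ) * K * (s * R) := by
    calc ∫ z in closedBall 0 R, |w z * D z| ∂μ
        ≤ ∫ z in closedBall 0 R, |w z| * (K * (s * R)) ∂μ := by
          refine setIntegral_mono_on hwD.integrableOn (hw.abs.mul_const _).integrableOn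
            measurableSet_closedBall fun z hz => ?_
          rw [abs_mul]
          gcongr
          exact (hD_lip z).trans (by gcongr; simpa using hz)
      _ ≤ ∫ z, |w z| * (K * (s * R)) ∂μ :=
          setIntegral_le_integral (hw.abs.mul_const _) (.of_forall fun z => by positivity)
      _ = (∫ z, |w z| ∂μ) * K * (s * R) := by rw [integral_mul_const, mul_assoc]
  have h_tail : ∫ z in (closedBall 0 R)ᶜ, |w z * D z| ∂μ
      ≤ 2 * M * ∫ z in (closedBall 0 R)ᶜ, |w z| ∂μ := by
    rw [← integral_const_mul]
    refine setIntegral_mono hwD.integrableOn (hw.abs.const_mul _).integrableOn fun z => ?_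
    rw [abs_mul, mul_comm]
    exact mul_le_mul_of_nonneg_right (hD_bdd z) (abs_nonneg _)
  calc |(∫ z, w z ∂μ) * f x - ∫ z, w z * f (x - s • z) ∂μ|
      = |∫ z, w z * D z ∂μ| := by rw [h_diff]
    _ ≤ ∫ z, |w z * D z| ∂μ := abs_integral_le_integral_abs
    _ = ∫ z in closedBall 0 R, |w z * D z| ∂μ + ∫ z in (closedBall 0 R)ᶜ, |w z * D z| ∂μ :=
        (integral_add_compl measurableSet_closedBall hwD).symm
    _ ≤ _ := add_le_add h_ball h_tail

section Haar

variable {E : Type*} [NormedAddCommGroup E] [NormedSpace ℝ E] [FiniteDimensional ℝ E]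
  [MeasurableSpace E] [BorelSpace E] (μ : Measure E) [μ.IsAddHaarMeasure]

theorem integral_dilate_sub_mul (w f : E → ℝ) (x : E) {c : ℝ} (hc : 0 < c) :
    ∫ y, c ^ finrank ℝ E * w (c • (x - y)) * f y ∂μ = ∫ z, w z * f (x - c⁻¹ • z) ∂μ := by
  set G : E → ℝ := fun z => w z * f (x - c⁻¹ • z)
  have hG : ∀ y, w (c • (x - y)) * f y = G (c • (x - y)) := fun y => by
    simp only [G, inv_smul_smul₀ hc.ne', sub_sub_cancel]
  simp_rw [mul_assoc, hG]
  rw [integral_const_mul, integral_sub_left_eq_self (fun v => G (c • v)) μ x,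
    Measure.integral_comp_smul_of_nonneg μ G c (hR := hc.le), smul_eq_mul, ← mul_assoc,
    mul_inv_cancel₀ (by positivity), one_mul]

variable [Nontrivial E]

theorem integrableOn_norm_rpow_neg_of_lt {γ R : ℝ} (hγ : finrank ℝ E < γ) (hR : 0 < R) :
    IntegrableOn (fun z : E => ‖z‖ ^ (-γ)) (closedBall 0 R)ᶜ μ := by
  rw [← integrable_indicator_iff measurableSet_closedBall.compl,
    indicator_compl_closedBall_comp_norm (· ^ (-γ)), integrable_fun_norm_addHaar μ]
  have h : IntegrableOn (fun y : ℝ => y ^ ((finrank ℝ E : ℝ) - 1 - γ)) (Ioi R) :=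
    integrableOn_Ioi_rpow_of_lt (by linarith) hR
  refine IntegrableOn.congr_fun ?_
    (fun y hy => (pow_smul_indicator_Ioi_rpow_neg finrank_pos (R := R) hy).symm) measurableSet_Ioi
  exact (h.integrable_indicator measurableSet_Ioi).integrableOn

theorem setIntegral_norm_rpow_neg_of_lt {γ R : ℝ} (hγ : finrank ℝ E < γ) (hR : 0 < R) :
    ∫ z in (closedBall 0 R)ᶜ, ‖z‖ ^ (-γ) ∂μ
      = finrank ℝ E * μ.real (ball 0 1) / (γ - finrank ℝ E) * R ^ ((finrank ℝ E : ℝ) - γ) := by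
  rw [← integral_indicator measurableSet_closedBall.compl,
    indicator_compl_closedBall_comp_norm (· ^ (-γ)), integral_fun_norm_addHaar μ,
    setIntegral_congr_fun measurableSet_Ioi
      (fun y hy => pow_smul_indicator_Ioi_rpow_neg finrank_pos (R := R) hy),
    setIntegral_indicator measurableSet_Ioi, inter_eq_right.mpr (Ioi_subset_Ioi hR.le),
    integral_Ioi_rpow_of_lt (by linarith) hR, nsmul_eq_mul, smul_eq_mul,
    show (finrank ℝ E : ℝ) - 1 - γ + 1 = finrank ℝ E - γ by ring]
  rw [← neg_sub γ, div_neg]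
  ring

theorem setIntegral_compl_closedBall_abs_le {w : E → ℝ} (hw : Integrable w μ) {C γ R : ℝ}
    (hγ : finrank ℝ E < γ) (hR : 1 ≤ R) (hdecay : ∀ z : E, 1 ≤ ‖z‖ → |w z| ≤ C * ‖z‖ ^ (-γ)) :
    ∫ z in (closedBall 0 R)ᶜ, |w z| ∂μ ≤ C * ∫ z in (closedBall 0 R)ᶜ, ‖z‖ ^ (-γ) ∂μ := by
  rw [← integral_const_mul]
  refine setIntegral_mono_on hw.abs.integrableOn
    ((integrableOn_norm_rpow_neg_of_lt μ hγ (by linarith)).const_mul C)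
    measurableSet_closedBall.compl fun z hz => hdecay z ?_
  simp only [mem_compl_iff, mem_closedBall_zero_iff, not_le] at hz
  linarith

theorem abs_mul_sub_integral_dilate_le {w f : E → ℝ} (hw : Integrable w μ) {a : ℝ}
    (ha : ∫ z, w z ∂μ = a) {K : NNReal} (hf : LipschitzWith K f) {M C γ : ℝ}
    (hM : ∀ y, |f y| ≤ M) (hγ : finrank ℝ E < γ)
    (hdecay : ∀ z : E, 1 ≤ ‖z‖ → |w z| ≤ C * ‖z‖ ^ (-γ)) {c R : ℝ} (hc : 0 < c) (hR : 1 ≤ R)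
    (x : E) :
    |a * f x - ∫ y, c ^ finrank ℝ E * w (c • (x - y)) * f y ∂μ|
      ≤ (∫ z, |w z| ∂μ) * K * (c⁻¹ * R) + 2 * M * C *
        (finrank ℝ E * μ.real (ball 0 1) / (γ - finrank ℝ E) * R ^ ((finrank ℝ E : ℝ) - γ)) := by
  rw [integral_dilate_sub_mul μ w f x hc, ← ha, mul_assoc (2 * M)]
  have hM0 : 0 ≤ 2 * M := by linarith [(abs_nonneg _).trans (hM x)]
  grw [abs_integral_mul_sub_integral_mul_comp_le hw hf hM x (inv_nonneg.mpr hc.le)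
      (zero_le_one.trans hR), setIntegral_compl_closedBall_abs_le μ hw hγ hR hdecay,
    setIntegral_norm_rpow_neg_of_lt μ hγ (by linarith)]

end Haar

theorem EuclideanSpace.measureReal_ball_fin_three (x : EuclideanSpace ℝ (Fin 3)) {r : ℝ}
    (hr : 0 ≤ r) : volume.real (ball x r) = 4 * π / 3 * r ^ 3 := by
  simp only [Measure.real, EuclideanSpace.volume_ball_fin_three, ENNReal.toReal_mul,
    ENNReal.toReal_pow, ENNReal.toReal_ofReal hr,
    ENNReal.toReal_ofReal (by positivity : 0 ≤ π * 4 / 3)]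
  ring

theorem local_vs_convolved_nonlinearity_general
    (w : EuclideanSpace ℝ (Fin 3) → ℝ)
    (hw1 : Integrable w) (a : ℝ) (ha : ∫ x, w x = a)
    (u : EuclideanSpace ℝ (Fin 3) → ℂ) (L Mu : ℝ)
    (hLip : ∀ x y : EuclideanSpace ℝ (Fin 3),
      |‖u x‖ ^ 2 - ‖u y‖ ^ 2| ≤ L * ‖x - y‖)
    (hMu : ∀ x, ‖u x‖ ≤ Mu)
    (C γ β : ℝ) (hγ : 3 < γ) (hβ : 0 < β)
    (hdecay : ∀ z : EuclideanSpace ℝ (Fin 3), 1 ≤ ‖z‖ → |w z| ≤ C * ‖z‖ ^ (-γ))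
    (α : ℝ) (hα : α = β * (γ - 3) / (γ - 2)) (N : ℕ) (hN : 1 ≤ N) :
    ∀ x : EuclideanSpace ℝ (Fin 3),
      |a * ‖u x‖ ^ 2 -
          ∫ y, (N : ℝ) ^ (3 * β) * w (((N : ℝ) ^ β : ℝ) • (x - y)) * ‖u y‖ ^ 2|
        ≤ (∫ z, |w z|) * L * (N : ℝ) ^ (-α) +
          (8 * π * C / (γ - 3)) * Mu ^ 2 * (N : ℝ) ^ (-α) := by
  intro x
  have hN0 : (0 : ℝ) < N := by exact_mod_cast hN
  have hf : LipschitzWith L.toNNReal fun y => ‖u y‖ ^ 2 :=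
    .of_dist_le' fun y z => by simpa only [dist_eq_norm, Real.norm_eq_abs] using hLip y z
  have hM : ∀ y, |‖u y‖ ^ 2| ≤ Mu ^ 2 := fun y => by
    rw [abs_of_nonneg (by positivity)]
    exact pow_le_pow_left₀ (norm_nonneg _) (hMu y) 2
  -- `β / (γ - 2) = β - α`
  set R : ℝ := (N : ℝ) ^ (β / (γ - 2))
  have hR : 1 ≤ R := one_le_rpow (by exact_mod_cast hN) (div_nonneg hβ.le (by linarith))
  have hγ2 : γ - 2 ≠ 0 := by linarith
  have hcR : ((N : ℝ) ^ β)⁻¹ * R = (N : ℝ) ^ (-α) := by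
    rw [← rpow_neg hN0.le, ← rpow_add hN0, hα]
    congr 1
    field_simp
    ring
  have hRγ : R ^ ((3 : ℝ) - γ) = (N : ℝ) ^ (-α) := by
    rw [← rpow_mul hN0.le, hα]
    congr 1
    field_simp
    ring
  have hc3 : ((N : ℝ) ^ β) ^ 3 = (N : ℝ) ^ (3 * β) := by
    rw [← rpow_natCast, ← rpow_mul hN0.le, Nat.cast_ofNat, mul_comm]
  have h_bound := abs_mul_sub_integral_dilate_le volume hw1 ha hf hM (by simpa using hγ) hdecay
    (rpow_pos_of_pos hN0 β) hR x
  rw [finrank_euclideanSpace_fin, hc3,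
    EuclideanSpace.measureReal_ball_fin_three _ zero_le_one, one_pow, mul_one, Nat.cast_ofNat,
    hcR, hRγ, Real.coe_toNNReal _ (nonneg_of_abs_sub_le_mul_norm hLip)] at h_bound
  convert h_bound using 2
  field_simp
  ring

/-- Sup-norm comparison of the local and convolved nonlinearities: if `∫ w = a`,
`|u|²` is `L`-Lipschitz, `‖u‖_∞ ≤ Mu`, and `|w(z)| ≤ C|z|^{−γ}` for `|z| ≥ 1`
with `γ > 3`, then with `w_N(x) = N^{3β} w(N^β x)` and `α = β(γ−3)/(γ−2)`,
`‖a|u|² − w_N * |u|²‖_∞ ≤ ‖w‖₁ L N^{−α} + (8πC/(γ−3)) ‖u‖_∞² N^{−α}`. -/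
theorem local_vs_convolved_nonlinearity
    (w : EuclideanSpace ℝ (Fin 3) → ℝ) (hmeas : Measurable w)
    (hw1 : Integrable w) (a : ℝ) (ha : ∫ x, w x = a)
    (u : EuclideanSpace ℝ (Fin 3) → ℂ) (L Mu : ℝ)
    (hLip : ∀ x y : EuclideanSpace ℝ (Fin 3),
      |‖u x‖ ^ 2 - ‖u y‖ ^ 2| ≤ L * ‖x - y‖)
    (hMu : ∀ x, ‖u x‖ ≤ Mu)
    (C γ β : ℝ) (hC : 0 ≤ C) (hγ : 3 < γ) (hβ : 0 < β)
    (hdecay : ∀ z : EuclideanSpace ℝ (Fin 3), 1 ≤ ‖z‖ → |w z| ≤ C * ‖z‖ ^ (-γ))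
    (α : ℝ) (hα : α = β * (γ - 3) / (γ - 2)) (N : ℕ) (hN : 1 ≤ N) :
    ∀ x : EuclideanSpace ℝ (Fin 3),
      |a * ‖u x‖ ^ 2 -
          ∫ y, (N : ℝ) ^ (3 * β) * w (((N : ℝ) ^ β : ℝ) • (x - y)) * ‖u y‖ ^ 2|
        ≤ (∫ z, |w z|) * L * (N : ℝ) ^ (-α) +
          (8 * π * C / (γ - 3)) * Mu ^ 2 * (N : ℝ) ^ (-α) :=
  local_vs_convolved_nonlinearity_general w hw1 a ha u L Mu hLip hMu C γ β hγ hβ hdecay α hα N hN
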